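/- There exists a map σ: PSym(3) → Sym(3) such that σ(V) = diag(s,0,0) with s > 0 only for the simple stretch V = diag(1+s,1,1), yet σ does not satisfy the Baker–Ericksen inequalities. Concretely: σ(V) = (1 − h(λ₁,λ₂,λ₃)) V − I with h(λ₁,λ₂,λ₃) = (λ₁−λ₂)²(λ₁−λ₃)²(λ₂−λ₃)² (λᵢ the eigenvalues of V) has the property that σ(V) = diag(s,0,0) forces V = diag(1+s,1,1), while for V = diag(3,2,1) one gets σ(V) = diag(−4,−3,−2), violating λ₁ > λ₂ ⟹ σ₁ ≥ σ₂. -/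

import Mathlib

open Matrix

/-- PSym(3): positive-definite symmetric real 3×3 matrices. -/
def PSym3 : Set (Matrix (Fin 3) (Fin 3) ℝ) := {V | V.IsSymm ∧ V.PosDef}

/-- h(λ₁,λ₂,λ₃) = (λ₁−λ₂)²(λ₁−λ₃)²(λ₂−λ₃)², evaluated at the eigenvalues of
a (Hermitian, i.e. real symmetric) matrix V; it is symmetric in the
eigenvalues and vanishes iff two eigenvalues coincide. -/
noncomputable def hdisc (V : Matrix (Fin 3) (Fin 3) ℝ) : ℝ :=
  if hV : V.IsHermitian then
    (hV.eigenvalues 0 - hV.eigenvalues 1) ^ 2 *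
      (hV.eigenvalues 0 - hV.eigenvalues 2) ^ 2 *
      (hV.eigenvalues 1 - hV.eigenvalues 2) ^ 2
  else 0

/-- Marzano counterexample map: σ(V) = (1 − h(λ₁,λ₂,λ₃)) V − I. -/
noncomputable def sigmaM (V : Matrix (Fin 3) (Fin 3) ℝ) :
    Matrix (Fin 3) (Fin 3) ℝ :=
  (1 - hdisc V) • V - 1

/-! The discriminant `h` depends only on the set of eigenvalues, which for a diagonal matrix is the
set of its diagonal entries. If `σ(V) = diag(s, 0, 0)` then `(1 - h) V = diag(1 + s, 1, 1)`, so `V` is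
a multiple of `diag(1 + s, 1, 1)`; two of its eigenvalues coincide, hence `h = 0` and
`V = diag(1 + s, 1, 1)`. For `V = diag(3, 2, 1)` one has `h = 4`, so `σ(V) = -3V - I` reverses the
order of the eigenvalues. -/

open Function

lemma Function.injective_iff_of_range_eq {α β : Type*} [Fintype α] [DecidableEq β]
    {f g : α → β} (h : Set.range f = Set.range g) : Injective f ↔ Injective g := by
  have himage : Finset.univ.image f = Finset.univ.image g :=
    Finset.coe_injective (by simpa using h)
  rw [← Set.injOn_univ, ← Set.injOn_univ, ← Finset.coe_univ, ← Finset.card_image_iff,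
    ← Finset.card_image_iff, himage]

lemma Matrix.IsHermitian.range_eigenvalues_diagonal {n : Type*} [Fintype n] [DecidableEq n]
    {d : n → ℝ} (hd : (diagonal d).IsHermitian) : Set.range hd.eigenvalues = Set.range d := by
  rw [← hd.spectrum_real_eq_range_eigenvalues, spectrum_diagonal]

lemma Matrix.diagonal_mulVec_single_one {n R : Type*} [Fintype n] [DecidableEq n] [Semiring R]
    (d : n → R) (i : n) : diagonal d *ᵥ Pi.single i 1 = d i • Pi.single i 1 := by
  rw [diagonal_mulVec_single, ← Pi.single_smul, smul_eq_mul, mul_one]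

def tripleDiscr (x : Fin 3 → ℝ) : ℝ :=
  (x 0 - x 1) ^ 2 * (x 0 - x 2) ^ 2 * (x 1 - x 2) ^ 2

lemma tripleDiscr_eq_zero_iff (x : Fin 3 → ℝ) : tripleDiscr x = 0 ↔ ¬ Injective x := by
  simp only [tripleDiscr, mul_eq_zero, pow_eq_zero_iff two_ne_zero, sub_eq_zero]
  constructor
  · rintro (((h | h) | h)) hx <;> exact absurd (hx h) (by decide)
  · intro hx
    by_contra! hne
    obtain ⟨⟨h01, h02⟩, h12⟩ := hne
    refine hx fun i j hij => ?_
    fin_cases i <;> fin_cases j <;> simp_all [eq_comm]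

lemma tripleDiscr_eq_of_injective_of_range_eq {x y : Fin 3 → ℝ} (hy : Injective y)
    (h : Set.range x = Set.range y) : tripleDiscr x = tripleDiscr y := by
  have hmem : ∀ k, ∃ i, x i = y k := fun k => h.ge (Set.mem_range_self k)
  obtain ⟨i₀, h₀⟩ := hmem 0
  obtain ⟨i₁, h₁⟩ := hmem 1
  obtain ⟨i₂, h₂⟩ := hmem 2
  have h01 : y 0 ≠ y 1 := hy.ne (by decide)
  have h02 : y 0 ≠ y 2 := hy.ne (by decide)
  have h12 : y 1 ≠ y 2 := hy.ne (by decide)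
  -- `i₀, i₁, i₂` is a permutation of `0, 1, 2`, and `tripleDiscr` is symmetric.
  unfold tripleDiscr
  fin_cases i₀ <;> fin_cases i₁ <;> fin_cases i₂ <;> simp_all <;> ring

lemma tripleDiscr_eq_of_range_eq {x y : Fin 3 → ℝ} (h : Set.range x = Set.range y) :
    tripleDiscr x = tripleDiscr y := by
  by_cases hy : Injective y
  · exact tripleDiscr_eq_of_injective_of_range_eq hy h
  · have hx : ¬ Injective x := (Function.injective_iff_of_range_eq h).not.mpr hy
    rw [(tripleDiscr_eq_zero_iff x).mpr hx, (tripleDiscr_eq_zero_iff y).mpr hy]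

lemma hdisc_diagonal (d : Fin 3 → ℝ) : hdisc (diagonal d) = tripleDiscr d := by
  have hd : (diagonal d).IsHermitian := isHermitian_diagonal d
  rw [hdisc, dif_pos hd]
  exact tripleDiscr_eq_of_range_eq hd.range_eigenvalues_diagonal

lemma sigmaM_diagonal (d : Fin 3 → ℝ) :
    sigmaM (diagonal d) = diagonal fun i => (1 - tripleDiscr d) * d i - 1 := by
  rw [sigmaM, hdisc_diagonal, ← diagonal_one, ← diagonal_smul, ← diagonal_sub]
  rfl

lemma eq_diagonal_of_sigmaM_eq_diagonal {V : Matrix (Fin 3) (Fin 3) ℝ} {s : ℝ}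
    (hσ : sigmaM V = diagonal ![s, 0, 0]) : V = diagonal ![1 + s, 1, 1] := by
  set c := 1 - hdisc V with hc_def
  have hscaled : c • V = diagonal ![1 + s, 1, 1] := by
    rw [eq_add_of_sub_eq hσ, ← diagonal_one, diagonal_add]
    congr 1
    ext i
    fin_cases i <;> simp [add_comm]
  have hc : c ≠ 0 := fun h0 => by simpa [h0] using congr_fun (congr_fun hscaled 1) 1
  have hV : V = diagonal ![c⁻¹ * (1 + s), c⁻¹, c⁻¹] := by
    rw [← inv_smul_smul₀ hc V, hscaled, ← diagonal_smul]
    congr 1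
    ext i
    fin_cases i <;> simp
  have hh : hdisc V = 0 := by
    rw [hV, hdisc_diagonal]
    simp [tripleDiscr]
  simpa [hc_def, hh] using hscaled

lemma sigmaM_diagonal_three_two_one :
    sigmaM (diagonal ![3, 2, 1]) = diagonal ![-10, -7, -4] := by
  have hd : tripleDiscr ![3, 2, 1] = 4 := by simp [tripleDiscr]; norm_num
  rw [sigmaM_diagonal, hd]
  congr 1
  ext i
  fin_cases i <;> norm_num

/-- The map σ(V) = (1 − h) V − I produces the uniaxial tension
stress diag(s,0,0) with s > 0 only for the simple stretch V = diag(1+s,1,1),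
yet it violates the Baker–Ericksen inequalities: for V = diag(3,2,1) there
are eigenvalues λᵢ > λⱼ of V whose corresponding stress eigenvalues satisfy
σᵢ < σⱼ. -/
theorem marzano_counterexample :
    (∀ V ∈ PSym3, ∀ s : ℝ, 0 < s →
      sigmaM V = Matrix.diagonal ![s, 0, 0] →
        V = Matrix.diagonal ![1 + s, 1, 1]) ∧
    (∃ V ∈ PSym3, ∃ v w : Fin 3 → ℝ, v ≠ 0 ∧ w ≠ 0 ∧
      ∃ lami lamj si sj : ℝ,
        V.mulVec v = lami • v ∧ (sigmaM V).mulVec v = si • v ∧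
        V.mulVec w = lamj • w ∧ (sigmaM V).mulVec w = sj • w ∧
        lami > lamj ∧ si < sj) := by
  refine ⟨fun V _ s _ hσ => eq_diagonal_of_sigmaM_eq_diagonal hσ, ?_⟩
  have hσ := sigmaM_diagonal_three_two_one
  have hpos : (diagonal ![(3 : ℝ), 2, 1]).PosDef :=
    posDef_diagonal_iff.mpr fun i => by fin_cases i <;> norm_num
  exact ⟨diagonal ![3, 2, 1], ⟨isSymm_diagonal _, hpos⟩, Pi.single 0 1, Pi.single 2 1,
    by simp, by simp, 3, 1, -10, -4,
    diagonal_mulVec_single_one _ 0, hσ ▸ diagonal_mulVec_single_one _ 0,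
    diagonal_mulVec_single_one _ 2, hσ ▸ diagonal_mulVec_single_one _ 2, by norm_num, by norm_num⟩
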